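/- Let F be a set of measurable functions on X bounded by C, and let f : Y × X → ℝ be jointly measurable with f(y,·) ∈ F for every y ∈ Y. Then for a probability measure P on Y, the function g(x) := ∫ f(y,x) dP(y) is well-defined, and for any two probability measures P_X, P_Q on X, |∫ g dP_X − ∫ g dP_Q| ≤ sup_{f∈F} |∫ f dP_X − ∫ f dP_Q|. -/
import Mathlib

open MeasureTheory

/-- maximal generator lemma, Müller: Let `F` be a set of measurable
functions on `X` bounded by `C`, and `f : Y × X → ℝ` jointly measurable with
`f(y,·) ∈ F` for every `y`. For a probability measure `P` on `Y`, the averaged function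
`g x := ∫ f(y,x) dP(y)` satisfies, for any probability measures `P_X, P_Q` on `X`,
`|∫ g dP_X − ∫ g dP_Q| ≤ sup_{f∈F} |∫ f dP_X − ∫ f dP_Q|`. -/
theorem maximal_generator_lemma {X Y : Type*} [MeasurableSpace X] [MeasurableSpace Y]
    (C : ℝ) (hC : 0 < C) (F : Set (X → ℝ))
    (hF : ∀ f ∈ F, Measurable f ∧ ∀ x, |f x| ≤ C)
    (f : Y → X → ℝ) (hmeas : Measurable (Function.uncurry f)) (hfF : ∀ y, f y ∈ F)
    (P : Measure Y) [IsProbabilityMeasure P]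
    (PX PQ : Measure X) [IsProbabilityMeasure PX] [IsProbabilityMeasure PQ] :
    |(∫ x, (∫ y, f y x ∂P) ∂PX) - ∫ x, (∫ y, f y x ∂P) ∂PQ| ≤
      ⨆ φ : F, |(∫ x, (φ : X → ℝ) x ∂PX) - ∫ x, (φ : X → ℝ) x ∂PQ| := by
  -- integrability on product measures
  have hint : ∀ μ : Measure X, ∀ _ : IsProbabilityMeasure μ,
      Integrable (Function.uncurry f) (P.prod μ) := by
    intro μ hμ
    refine (integrable_const C).mono' hmeas.aestronglyMeasurable ?_
    filter_upwards with p
    exact (hF _ (hfF p.1)).2 p.2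
  -- swap integrals
  have hswapX : (∫ x, (∫ y, f y x ∂P) ∂PX) = ∫ y, (∫ x, f y x ∂PX) ∂P :=
    (integral_integral_swap (hint PX inferInstance)).symm
  have hswapQ : (∫ x, (∫ y, f y x ∂P) ∂PQ) = ∫ y, (∫ x, f y x ∂PQ) ∂P :=
    (integral_integral_swap (hint PQ inferInstance)).symm
  rw [hswapX, hswapQ, ← integral_sub]
  · set S := ⨆ φ : F, |(∫ x, (φ : X → ℝ) x ∂PX) - ∫ x, (φ : X → ℝ) x ∂PQ| with hS
    have hbdd : BddAbove (Set.range fun φ : F =>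
        |(∫ x, (φ : X → ℝ) x ∂PX) - ∫ x, (φ : X → ℝ) x ∂PQ|) := by
      refine ⟨2 * C, ?_⟩
      rintro _ ⟨⟨φ, hφ⟩, rfl⟩
      have h1 : ‖∫ x, φ x ∂PX‖ ≤ C * (PX Set.univ).toReal :=
        norm_integral_le_of_norm_le_const (Filter.Eventually.of_forall fun x => by
          simpa using (hF φ hφ).2 x)
      have h2 : ‖∫ x, φ x ∂PQ‖ ≤ C * (PQ Set.univ).toReal :=
        norm_integral_le_of_norm_le_const (Filter.Eventually.of_forall fun x => by
          simpa using (hF φ hφ).2 x)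
      simp only [measure_univ, ENNReal.toReal_one, mul_one] at h1 h2
      calc |(∫ x, φ x ∂PX) - ∫ x, φ x ∂PQ|
          ≤ |∫ x, φ x ∂PX| + |∫ x, φ x ∂PQ| := abs_sub _ _
        _ ≤ C + C := add_le_add h1 h2
        _ = 2 * C := by ring
    have hle : ∀ y, |(∫ x, f y x ∂PX) - ∫ x, f y x ∂PQ| ≤ S := fun y =>
      le_ciSup hbdd (⟨f y, hfF y⟩ : F)
    rw [← Real.norm_eq_abs]
    calc ‖∫ y, ((∫ x, f y x ∂PX) - ∫ x, f y x ∂PQ) ∂P‖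
        ≤ S * (P Set.univ).toReal :=
          norm_integral_le_of_norm_le_const (Filter.Eventually.of_forall fun y => by
            rw [Real.norm_eq_abs]; exact hle y)
      _ = S := by simp
  · exact (hint PX inferInstance).integral_prod_left
  · exact (hint PQ inferInstance).integral_prod_left
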